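/- arXiv:1512.05686 — 2 statements merged into one kernel-verified Lean document; each statement's English description precedes it below -/
import Mathlib

section
/- Let R be a commutative ring, M an R-module, and p a prime number such that multiplication by p is injective on M. Then both (p, XY − p) and (XY − p, p) are weakly regular sequences on the module M[X,Y] of polynomials in two variables X, Y with coefficients in M, viewed as a module over R[X,Y] = R[X][Y] (realized as PolynomialModule (R[X]) (PolynomialModule R M)). -/
/-!
Multiplication by a polynomial whose constant coefficient is regular is injective (compare lowest
nonzero coefficients), so `p` is regular on `M[X,Y]`, and so is `XY - p`, whose constant
coefficient in `Y` is `-p`. Modulo `p`, the element `XY - p` acts as `XY`, which only shifts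
coefficients; hence `XY - p` is regular on `M[X,Y]/p`. For the reversed order: if `p f = (XY - p) g`
then `XY g ∈ p M[X,Y]`, so `g = p h`, and cancelling `p` gives `f = (XY - p) h`.
-/

open Polynomial

open scoped Pointwise

lemma IsSMulRegular.neg {R M : Type*} [Ring R] [AddCommGroup M] [Module R M] {r : R}
    (h : IsSMulRegular M r) : IsSMulRegular M (-r) :=
  isSMulRegular_iff_right_eq_zero_of_smul.mpr fun _ hm =>
    h.right_eq_zero_of_smul (neg_eq_zero.mp (by rwa [neg_smul] at hm))

section QuotSMulTop

variable {A N : Type*} [CommRing A] [AddCommGroup N] [Module A N]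

lemma IsSMulRegular.quotSMulTop_swap {a b : A} (ha : IsSMulRegular N a)
    (hb : IsSMulRegular (QuotSMulTop a N) b) : IsSMulRegular (QuotSMulTop b N) a := by
  rw [isSMulRegular_quotient_iff_mem_of_smul_mem] at hb ⊢
  intro x hx
  obtain ⟨y, -, hy⟩ := Submodule.mem_smul_pointwise_iff_exists _ _ _ |>.mp hx
  obtain ⟨z, -, rfl⟩ := Submodule.mem_smul_pointwise_iff_exists _ _ _ |>.mp
    (hb y (hy ▸ Submodule.smul_mem_pointwise_smul _ _ _ Submodule.mem_top))
  refine Submodule.mem_smul_pointwise_iff_exists _ _ _ |>.mpr ⟨z, Submodule.mem_top, ha ?_⟩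
  simp only [← hy, smul_comm a b]

lemma isSMulRegular_quotSMulTop_sub_iff (r s : A) :
    IsSMulRegular (QuotSMulTop r N) (s - r) ↔ IsSMulRegular (QuotSMulTop r N) s := by
  have hr := Module.mem_annihilator.mp (QuotSMulTop.mem_annihilator (M := N) r)
  have : ((s - r) • · : QuotSMulTop r N → _) = (s • ·) := funext fun x => by
    rw [sub_smul, hr, sub_zero]
  exact iff_of_eq (congrArg Function.Injective this)

end QuotSMulTop

namespace PolynomialModule

variable {A B : Type*} [CommRing A] [AddCommGroup B] [Module A B]

lemma coeff_C_smul (a : A) (v : PolynomialModule A B) (n : ℕ) :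
    (C a • v).coeff n = a • v.coeff n := by
  simp [← monomial_zero_left]

lemma coeff_X_smul_succ (v : PolynomialModule A B) (n : ℕ) :
    ((X : A[X]) • v).coeff (n + 1) = v.coeff n := by
  simp [← monomial_one_one_eq_X]

lemma isSMulRegular_of_coeff_zero {f : A[X]} (hf : IsSMulRegular B (f.coeff 0)) :
    IsSMulRegular (PolynomialModule A B) f := by
  refine isSMulRegular_iff_right_eq_zero_of_smul.mpr fun v hv => coeff_eq_zero.mp ?_
  ext n
  induction n using Nat.strong_induction_on with
  | _ n ih =>
    refine hf.right_eq_zero_of_smul ?_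
    have := congrArg (coeff · n) hv
    simp only [smul_apply, coeff_zero, Finsupp.coe_zero, Pi.zero_apply] at this
    rwa [Finset.sum_eq_single (0, n)] at this
    · rintro ⟨i, j⟩ hmem hne
      have hij : i + j = n := by simpa using hmem
      simp [ih j (by grind)]
    · simp

lemma mem_C_smul_top_iff {a : A} {v : PolynomialModule A B} :
    v ∈ C a • (⊤ : Submodule A[X] (PolynomialModule A B)) ↔
      ∀ n, v.coeff n ∈ a • (⊤ : Submodule A B) := by
  constructor
  · rintro hv n
    obtain ⟨w, -, rfl⟩ := Submodule.mem_smul_pointwise_iff_exists _ _ _ |>.mp hv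
    rw [coeff_C_smul]
    exact Submodule.smul_mem_pointwise_smul _ _ _ Submodule.mem_top
  · intro hv
    rw [← ofCoeff_coeff v, ← Finsupp.sum_single v.coeff, ofCoeff_finsuppSum]
    refine Submodule.finsuppSum_mem _ _ _ _ fun n _ => ?_
    obtain ⟨m, -, hm⟩ := Submodule.mem_smul_pointwise_iff_exists _ _ _ |>.mp (hv n)
    rw [ofCoeff_single, ← hm, single_smul, ← algebraMap_smul A[X], algebraMap_eq]
    exact Submodule.smul_mem_pointwise_smul _ _ _ Submodule.mem_top

lemma isSMulRegular_quotSMulTop_C {a b : A} (h : IsSMulRegular (QuotSMulTop a B) b) :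
    IsSMulRegular (QuotSMulTop (C a) (PolynomialModule A B)) (C b) := by
  rw [isSMulRegular_quotient_iff_mem_of_smul_mem] at h ⊢
  simp only [mem_C_smul_top_iff, coeff_C_smul]
  exact fun v hv n => h _ (hv n)

lemma isSMulRegular_quotSMulTop_X (a : A) :
    IsSMulRegular (QuotSMulTop (C a) (PolynomialModule A B)) (X : A[X]) := by
  rw [isSMulRegular_quotient_iff_mem_of_smul_mem]
  simp only [mem_C_smul_top_iff]
  exact fun v hv n => coeff_X_smul_succ v n ▸ hv (n + 1)

end PolynomialModule

open PolynomialModule in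
theorem stmt_2_general (R : Type) [CommRing R] (M : Type) [AddCommGroup M] [Module R M]
    (p : ℕ) (hpM : IsSMulRegular M (p : R)) :
    RingTheory.Sequence.IsWeaklyRegular (PolynomialModule R[X] (PolynomialModule R M))
      [(p : R[X][X]), Polynomial.C Polynomial.X * Polynomial.X - (p : R[X][X])] ∧
      RingTheory.Sequence.IsWeaklyRegular (PolynomialModule R[X] (PolynomialModule R M))
        [Polynomial.C Polynomial.X * Polynomial.X - (p : R[X][X]), (p : R[X][X])] := by
  have hpMX : IsSMulRegular (PolynomialModule R M) (p : R[X]) :=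
    isSMulRegular_of_coeff_zero (by simpa using hpM)
  have hpMXY : IsSMulRegular (PolynomialModule R[X] (PolynomialModule R M)) (p : R[X][X]) :=
    isSMulRegular_of_coeff_zero (by simpa using hpMX)
  have hXYp : IsSMulRegular (PolynomialModule R[X] (PolynomialModule R M))
      (C X * X - (p : R[X][X])) :=
    isSMulRegular_of_coeff_zero (by simpa using hpMX.neg)
  have hXYp_modp : IsSMulRegular (QuotSMulTop (p : R[X][X])
      (PolynomialModule R[X] (PolynomialModule R M))) (C X * X - (p : R[X][X])) := by
    rw [isSMulRegular_quotSMulTop_sub_iff, ← C_eq_natCast (R := R[X]), ← C_eq_natCast (R := R)]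
    exact (isSMulRegular_quotSMulTop_C (isSMulRegular_quotSMulTop_X _)).mul
      (isSMulRegular_quotSMulTop_X _)
  exact ⟨.cons hpMXY (.cons hXYp_modp (.nil _ _)),
    .cons hXYp (.cons (hpMXY.quotSMulTop_swap hXYp_modp) (.nil _ _))⟩

/-- Let `R` be a commutative ring, `M` an `R`-module, and `p` a prime number
such that multiplication by `p` is injective on `M`. Then both `(p, XY − p)` and `(XY − p, p)`
are weakly regular sequences on the module `M[X,Y]` of polynomials in two variables over `M`,
realized as `PolynomialModule (R[X]) (PolynomialModule R M)`, a module over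
`R[X][Y] = Polynomial (Polynomial R)`.  Here the inner variable `X` of `R[X][Y]` is
`Polynomial.C Polynomial.X` and the outer variable `Y` is `Polynomial.X`. -/
theorem stmt_2 (R : Type) [CommRing R] (M : Type) [AddCommGroup M] [Module R M]
    (p : ℕ) (hp : p.Prime) (hpM : IsSMulRegular M (p : R)) :
    RingTheory.Sequence.IsWeaklyRegular (PolynomialModule R[X] (PolynomialModule R M))
      [(p : R[X][X]), Polynomial.C Polynomial.X * Polynomial.X - (p : R[X][X])] ∧
      RingTheory.Sequence.IsWeaklyRegular (PolynomialModule R[X] (PolynomialModule R M))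
        [Polynomial.C Polynomial.X * Polynomial.X - (p : R[X][X]), (p : R[X][X])] :=
  stmt_2_general R M p hpM
end

section
/- Let R be an integral domain of characteristic 0 and p a prime number. Then both (p, XY − p) and (XY − p, p) are weakly regular sequences on the polynomial ring R[X,Y] = R[X][Y], where p denotes the image of the prime number p and XY − p denotes the element X·Y − p of R[X][Y]. -/
open Polynomial Pointwise

/-- In a domain `S`, if `X * a = C s * b` with `s ≠ 0`, then `C s ∣ a`. -/
private lemma aux_X_mul_eq {S : Type} [CommRing S] [IsDomain S] {s : S} (hs : s ≠ 0)
    {a b : S[X]} (h : X * a = C s * b) : C s ∣ a := by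
  have hb0 : b.coeff 0 = 0 := by
    have h0 := congrArg (fun q => Polynomial.coeff q 0) h
    simp only [mul_coeff_zero, coeff_X_zero, coeff_C_zero, zero_mul] at h0
    exact (mul_eq_zero.mp h0.symm).resolve_left hs
  have hb : b = X * b.divX := by
    conv_lhs => rw [← X_mul_divX_add b, hb0, map_zero, add_zero]
  refine ⟨b.divX, mul_left_cancel₀ (X_ne_zero (R := S)) ?_⟩
  calc X * a = C s * b := h
    _ = C s * (X * b.divX) := by rw [← hb]
    _ = X * (C s * b.divX) := by ring

/-- membership in `a • ⊤` -/
private lemma aux_mem_smul_top {A : Type} [CommRing A] (a x : A) :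
    x ∈ (a • ⊤ : Submodule A A) ↔ a ∣ x := by
  rw [← Submodule.ideal_span_singleton_smul, smul_eq_mul, Ideal.mul_top,
    Ideal.mem_span_singleton]

variable {R : Type} [CommRing R] [IsDomain R] [CharZero R]

omit [IsDomain R] in
private lemma aux_pne (p : ℕ) (hp : p.Prime) : ((p : ℕ) : R) ≠ 0 :=
  Nat.cast_ne_zero.mpr hp.ne_zero

omit [IsDomain R] [CharZero R] in
private lemma aux_cast (p : ℕ) :
    ((p : ℕ) : R[X][X]) = C (C ((p : ℕ) : R)) := by
  simp [map_natCast]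

/-- If `C X * q = ↑p * r` in `R[X][X]`, then `↑p ∣ q`. -/
private lemma aux_CX_mul (p : ℕ) (hp : p.Prime) {q r : R[X][X]}
    (h : C X * q = (p : R[X][X]) * r) : (p : R[X][X]) ∣ q := by
  rw [aux_cast] at h ⊢
  rw [C_dvd_iff_dvd_coeff]
  intro n
  have hn := congrArg (fun f => Polynomial.coeff f n) h
  simp only [coeff_C_mul] at hn
  exact aux_X_mul_eq (aux_pne p hp) hn

/-- If `X * q = ↑p * r` in `R[X][X]` (outer `X`), then `↑p ∣ q`. -/
private lemma aux_Y_mul (p : ℕ) (hp : p.Prime) {q r : R[X][X]}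
    (h : X * q = (p : R[X][X]) * r) : (p : R[X][X]) ∣ q := by
  rw [aux_cast] at h ⊢
  exact aux_X_mul_eq (C_ne_zero.mpr (aux_pne p hp)) h

/-- If `↑p * f = (C X * X - ↑p) * g` in `R[X][X]`, then `↑p ∣ g`. -/
private lemma aux_key (p : ℕ) (hp : p.Prime) {f g : R[X][X]}
    (h : (p : R[X][X]) * f = (C X * X - (p : R[X][X])) * g) : (p : R[X][X]) ∣ g := by
  rw [aux_cast] at h ⊢
  rw [C_dvd_iff_dvd_coeff]
  intro n
  have hn := congrArg (fun q => Polynomial.coeff q (n + 1)) h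
  simp only [sub_mul, coeff_sub, mul_assoc, coeff_C_mul, coeff_X_mul] at hn
  have key : X * g.coeff n = C ((p : ℕ) : R) * (f.coeff (n+1) + g.coeff (n+1)) := by
    linear_combination -hn
  exact aux_X_mul_eq (aux_pne p hp) key

/-- Let `R` be an integral domain of characteristic `0` and `p` a prime
number. Then both `(p, XY − p)` and `(XY − p, p)` are weakly regular sequences on the
polynomial ring `R[X,Y] = R[X][Y] = Polynomial (Polynomial R)`, where `p` denotes the image
of the prime number `p` and `XY − p` denotes `Polynomial.C Polynomial.X * Polynomial.X - p`
(the inner variable `X` is `Polynomial.C Polynomial.X`, the outer variable `Y` is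
`Polynomial.X`). -/
theorem stmt_3 (R : Type) [CommRing R] [IsDomain R] [CharZero R]
    (p : ℕ) (hp : p.Prime) :
    RingTheory.Sequence.IsWeaklyRegular R[X][X]
      [(p : R[X][X]), Polynomial.C Polynomial.X * Polynomial.X - (p : R[X][X])] ∧
      RingTheory.Sequence.IsWeaklyRegular R[X][X]
        [Polynomial.C Polynomial.X * Polynomial.X - (p : R[X][X]), (p : R[X][X])] := by
  have hpne : ((p : ℕ) : R[X][X]) ≠ 0 := by
    rw [aux_cast]
    simpa using aux_pne (R := R) p hp
  have hXYp_ne : (C X * X - ((p : ℕ) : R[X][X])) ≠ 0 := by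
    intro h0
    have h1 := congrArg (fun f => Polynomial.coeff f 0) h0
    rw [aux_cast] at h1
    simp only [coeff_sub, mul_coeff_zero, coeff_C_zero, coeff_X_zero, mul_zero,
      coeff_zero, zero_sub, neg_eq_zero] at h1
    exact aux_pne (R := R) p hp (by simpa using congrArg (fun f => Polynomial.coeff f 0) h1)
  have reg_p : IsSMulRegular R[X][X] ((p : ℕ) : R[X][X]) := by
    intro x y hxy
    exact mul_left_cancel₀ hpne (by simpa [smul_eq_mul] using hxy)
  have reg_xyp : IsSMulRegular R[X][X] (C X * X - ((p : ℕ) : R[X][X])) := by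
    intro x y hxy
    exact mul_left_cancel₀ hXYp_ne (by simpa [smul_eq_mul] using hxy)
  have quot1 : IsSMulRegular
      (QuotSMulTop ((p : ℕ) : R[X][X]) R[X][X]) (C X * X - ((p : ℕ) : R[X][X])) := by
    intro x y hxy
    obtain ⟨f, rfl⟩ := Submodule.Quotient.mk_surjective _ x
    obtain ⟨g, rfl⟩ := Submodule.Quotient.mk_surjective _ y
    dsimp only at hxy
    rw [← Submodule.Quotient.mk_smul, ← Submodule.Quotient.mk_smul,
      Submodule.Quotient.eq] at hxy
    rw [smul_eq_mul, smul_eq_mul, ← mul_sub, aux_mem_smul_top] at hxy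
    obtain ⟨r, hr⟩ := hxy
    have h1 : C X * (X * (f - g)) = ((p : ℕ) : R[X][X]) * (r + (f - g)) := by
      linear_combination hr
    obtain ⟨s, hs⟩ := aux_CX_mul p hp h1
    obtain ⟨t, ht⟩ := aux_Y_mul p hp hs
    rw [Submodule.Quotient.eq, aux_mem_smul_top]
    exact ⟨t, ht⟩
  have quot2 : IsSMulRegular
      (QuotSMulTop (C X * X - ((p : ℕ) : R[X][X])) R[X][X]) ((p : ℕ) : R[X][X]) := by
    intro x y hxy
    obtain ⟨f, rfl⟩ := Submodule.Quotient.mk_surjective _ x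
    obtain ⟨g, rfl⟩ := Submodule.Quotient.mk_surjective _ y
    dsimp only at hxy
    rw [← Submodule.Quotient.mk_smul, ← Submodule.Quotient.mk_smul,
      Submodule.Quotient.eq] at hxy
    rw [smul_eq_mul, smul_eq_mul, ← mul_sub, aux_mem_smul_top] at hxy
    obtain ⟨r, hr⟩ := hxy
    obtain ⟨h, hh⟩ := aux_key p hp hr
    rw [Submodule.Quotient.eq, aux_mem_smul_top]
    refine ⟨h, mul_left_cancel₀ hpne ?_⟩
    rw [hr, hh]; ring
  constructor
  · rw [RingTheory.Sequence.isWeaklyRegular_cons_iff,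
      RingTheory.Sequence.isWeaklyRegular_singleton_iff]
    exact ⟨reg_p, quot1⟩
  · rw [RingTheory.Sequence.isWeaklyRegular_cons_iff,
      RingTheory.Sequence.isWeaklyRegular_singleton_iff]
    exact ⟨reg_xyp, quot2⟩
end
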